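/- For x₀ ∈ ℝⁿ with ⟨xⱼ - x₀, x₀⟩ not all zero (j = 1,...,k+1), the k-plane Σ_{x₀} = H{x₀,x₁,...,x_{k+1}} ∩ H_{x₀} is contained in the hyperplane {x : ⟨x, ω⟩ = c} (ω a unit vector, c ∈ ℝ) if and only if: (i) ⟨x₀, ω⟩ = c, and (ii) there exists i with ⟨xᵢ - x₀, x₀⟩ ≠ 0 such that ⟨xᵢ - x₀, x₀⟩⟨xⱼ - x₀, ω⟩ = ⟨xⱼ - x₀, x₀⟩⟨xᵢ - x₀, ω⟩ for all j ≠ i. -/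

import Mathlib

open scoped RealInnerProductSpace

/-
The condition on `Σ_{x₀}` only involves the numbers `aⱼ = ⟪xⱼ - x₀, x₀⟫` and
`bⱼ = ⟪xⱼ - x₀, ω⟫`: the plane lies in the hyperplane iff `⟪x₀, ω⟫ = c` and the functional
`λ ↦ ∑ λⱼ bⱼ` vanishes on the kernel of `λ ↦ ∑ λⱼ aⱼ`, i.e. `b` is a multiple of `a ≠ 0`.
Proportionality is tested on the kernel vectors `aᵢ eⱼ - aⱼ eᵢ`.
-/

section Proportional

variable {K ι : Type*} [Field K] [Fintype ι] {a b : ι → K}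

theorem mul_eq_mul_of_forall_sum_mul_eq_zero
    (h : ∀ lam : ι → K, ∑ j, lam j * a j = 0 → ∑ j, lam j * b j = 0) (i j : ι) :
    a i * b j = a j * b i := by
  classical
  have hker := h (Pi.single j (a i) - Pi.single i (a j))
  simp only [Pi.sub_apply, sub_mul, Finset.sum_sub_distrib, Pi.single_apply, ite_mul,
    zero_mul, Finset.sum_ite_eq', Finset.mem_univ, if_true] at hker
  exact sub_eq_zero.mp (hker (by ring))

theorem sum_mul_eq_zero_of_mul_eq_mul {i : ι} (hi : a i ≠ 0)
    (h : ∀ j, a i * b j = a j * b i) {lam : ι → K} (hlam : ∑ j, lam j * a j = 0) :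
    ∑ j, lam j * b j = 0 := by
  have : a i * ∑ j, lam j * b j = (∑ j, lam j * a j) * b i := by
    rw [Finset.mul_sum, Finset.sum_mul]
    exact Finset.sum_congr rfl fun j _ => by rw [mul_left_comm, h j]; ring
  rw [hlam, zero_mul] at this
  exact (mul_eq_zero.mp this).resolve_left hi

theorem forall_add_sum_mul_eq_iff (hU : ∃ i, a i ≠ 0) (c₀ c : K) :
    (∀ lam : ι → K, ∑ j, lam j * a j = 0 → c₀ + ∑ j, lam j * b j = c) ↔
      (c₀ = c ∧ ∃ i, a i ≠ 0 ∧ ∀ j, j ≠ i → a i * b j = a j * b i) := by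
  constructor
  · intro h
    have hc : c₀ = c := by simpa using h 0 (by simp)
    have hker : ∀ lam : ι → K, ∑ j, lam j * a j = 0 → ∑ j, lam j * b j = 0 := fun lam hlam ↦
      by simpa [hc] using h lam hlam
    obtain ⟨i, hi⟩ := hU
    exact ⟨hc, i, hi, fun j _ => mul_eq_mul_of_forall_sum_mul_eq_zero hker i j⟩
  · rintro ⟨rfl, i, hi, hprop⟩ lam hlam
    have hprop' : ∀ j, a i * b j = a j * b i := fun j ↦ by
      by_cases hj : j = i
      · rw [hj]
      · exact hprop j hj
    rw [sum_mul_eq_zero_of_mul_eq_mul hi hprop' hlam, add_zero]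

end Proportional

theorem stmt6_general (n k : ℕ) (x : Fin (k + 1) → EuclideanSpace ℝ (Fin n))
    (x₀ : EuclideanSpace ℝ (Fin n))
    (hU : ∃ i : Fin (k + 1), ⟪x i - x₀, x₀⟫ ≠ 0)
    (ω : EuclideanSpace ℝ (Fin n)) (c : ℝ) :
    (∀ lam : Fin (k + 1) → ℝ, (∑ j, lam j * ⟪x j - x₀, x₀⟫) = 0 →
        ⟪x₀ + ∑ j, lam j • (x j - x₀), ω⟫ = c)
    ↔ (⟪x₀, ω⟫ = c ∧
        ∃ i : Fin (k + 1), ⟪x i - x₀, x₀⟫ ≠ 0 ∧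
          ∀ j : Fin (k + 1), j ≠ i →
            ⟪x i - x₀, x₀⟫ * ⟪x j - x₀, ω⟫ = ⟪x j - x₀, x₀⟫ * ⟪x i - x₀, ω⟫) := by
  simp only [inner_add_left, sum_inner, real_inner_smul_left]
  exact forall_add_sum_mul_eq_iff hU _ c

/-- The `k`-plane `Σ_{x₀} = {x₀ + ∑ⱼ λⱼ (xⱼ - x₀) : ∑ⱼ λⱼ ⟪xⱼ - x₀, x₀⟫ = 0}` is contained
in the hyperplane `{x : ⟪x, ω⟫ = c}` iff (i) `⟪x₀, ω⟫ = c` and (ii) there is an `i` with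
`⟪xᵢ - x₀, x₀⟫ ≠ 0` and `⟪xᵢ - x₀, x₀⟫⟪xⱼ - x₀, ω⟫ = ⟪xⱼ - x₀, x₀⟫⟪xᵢ - x₀, ω⟫` for all
`j ≠ i`. -/
theorem stmt6 (n k : ℕ) (x : Fin (k + 1) → EuclideanSpace ℝ (Fin n))
    (x₀ : EuclideanSpace ℝ (Fin n))
    (hU : ∃ i : Fin (k + 1), ⟪x i - x₀, x₀⟫ ≠ 0)
    (ω : EuclideanSpace ℝ (Fin n)) (hω : ‖ω‖ = 1) (c : ℝ) :
    (∀ lam : Fin (k + 1) → ℝ, (∑ j, lam j * ⟪x j - x₀, x₀⟫) = 0 →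
        ⟪x₀ + ∑ j, lam j • (x j - x₀), ω⟫ = c)
    ↔ (⟪x₀, ω⟫ = c ∧
        ∃ i : Fin (k + 1), ⟪x i - x₀, x₀⟫ ≠ 0 ∧
          ∀ j : Fin (k + 1), j ≠ i →
            ⟪x i - x₀, x₀⟫ * ⟪x j - x₀, ω⟫ = ⟪x j - x₀, x₀⟫ * ⟪x i - x₀, ω⟫) :=
  stmt6_general n k x x₀ hU ω c
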